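/- Let k > 2 and m = k+1 with m ≤ n. Let H_{k,s}(η,h) and H_{k,s}(η̃,h̃) be generalized twisted Gabidulin codes with η ≠ 0 and η̃ ≠ 0, and assume h̃ ≢ 0 (mod n). Let ψ : F_{q^n} → F_{q^n} be an F_q-linear map such that for every f ∈ H_{k,s}(η,h) there exists g ∈ H_{k,s}(η̃,h̃) with f(ψ(u)) = g(u) for all u ∈ U_S. Then there exists b ∈ F_{q^n} such that ψ(u) = b·u for all u ∈ U_S. -/

import Mathlib

/-!
On the `k + 1`-dimensional space `U_S`, every `F_q`-linear map agrees with a unique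
`q^s`-linearized polynomial `∑_{i ≤ k} c_i X^{q^{si}}`: uniqueness is Moore's lemma (for
`gcd(n, s) = 1` such a polynomial cannot vanish on an `N`-dimensional subspace unless its
`N` coefficients do), and existence follows by counting dimensions. Write `ψ` this way.
Composing with `f = ε X^{q^s}` and comparing the coefficients of `X` and `X^{q^{sk}}` with those
of the twisted `g` shows that the constant coefficient `e₀` of `ψ^{q^s}` satisfies
`η̃ e₀^{q^h̃} (ε^{q^h̃} - ε) = 0` for every `ε`; since `h̃ ≢ 0 (mod n)` some `ε` is not fixed,
so `e₀ = 0` and `ψ` has degree `< k`. Composing with `f = X^{q^{sj}}` for `j = 1, …, k - 1`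
then removes the top coefficient one at a time, leaving `ψ = c₀ X` on `U_S`.
-/

open Finset

/-- The value at `x` of the polynomial
`a₀X + a₁X^{q^s} + ⋯ + a_{k-1}X^{q^{s(k-1)}} + η a₀^{q^h} X^{q^{sk}}`
belonging to the generalized twisted Gabidulin code `H_{k,s}(η,h)`. -/
def Hval (q s k h : ℕ) {F : Type} [Field F] (η : F) (a : ℕ → F) (x : F) : F :=
  (∑ i ∈ Finset.range k, a i * x ^ q ^ (s * i)) + η * a 0 ^ q ^ h * x ^ q ^ (s * k)

open Module FiniteField

section Frobenius

variable (K : Type*) {L : Type*} [Field K] [Fintype K] [Field L] [Algebra K L]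

theorem frobeniusAlgHom_pow_apply (w : ℕ) (x : L) :
    (frobeniusAlgHom K L ^ w) x = x ^ Fintype.card K ^ w := by
  rw [AlgHom.coe_pow, coe_frobeniusAlgHom, pow_iterate]

variable {K} [Finite L]

theorem mem_range_algebraMap_of_pow_card_pow_eq_self {s : ℕ} (hs : (finrank K L).Coprime s)
    {x : L} (hx : x ^ Fintype.card K ^ s = x) : x ∈ Set.range (algebraMap K L) := by
  have hper_s : Function.IsPeriodicPt (frobeniusAlgHom K L) s x := by
    rw [Function.IsPeriodicPt, Function.IsFixedPt, ← AlgHom.coe_pow, frobeniusAlgHom_pow_apply,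
      hx]
  have hper_n : Function.IsPeriodicPt (frobeniusAlgHom K L) (finrank K L) x := by
    rw [Function.IsPeriodicPt, Function.IsFixedPt, ← AlgHom.coe_pow, ← orderOf_frobeniusAlgHom,
      pow_orderOf_eq_one, AlgHom.one_apply]
  have hfix : Function.IsFixedPt (frobeniusAlgHom K L) x := by
    have := hper_n.gcd hper_s
    rwa [hs.gcd_eq_one] at this
  rw [← IntermediateField.mem_bot, IsGalois.mem_bot_iff_fixed]
  intro g
  obtain ⟨i, hi⟩ := (bijective_frobeniusAlgHom_pow K L).2 (g : L →ₐ[K] L)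
  rw [← AlgEquiv.coe_toAlgHom, ← hi, AlgHom.coe_pow]
  exact (hfix.iterate _).eq

theorem exists_pow_card_pow_ne_self {h : ℕ} (h0 : 0 < h) (hlt : h < finrank K L) :
    ∃ x : L, x ^ Fintype.card K ^ h ≠ x := by
  by_contra! hfix
  have hpow : frobeniusAlgHom K L ^ h = 1 :=
    AlgHom.ext fun x => by rw [frobeniusAlgHom_pow_apply, hfix, AlgHom.one_apply]
  have := orderOf_le_of_pow_eq_one h0 hpow
  rw [orderOf_frobeniusAlgHom] at this
  omega

end Frobenius

def linearizedSum {L : Type*} [CommSemiring L] (q s N : ℕ) (c : ℕ → L) (x : L) : L :=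
  ∑ i ∈ range N, c i * x ^ q ^ (s * i)

def IsLinearizedOn {L : Type*} [CommSemiring L] (q s N : ℕ) (f : L → L) (V : Set L) : Prop :=
  ∃ c : ℕ → L, Set.EqOn f (linearizedSum q s N c) V

theorem linearizedSum_mul_pow_coeff {L : Type*} [CommSemiring L] (q s N : ℕ) (c : ℕ → L)
    (v y : L) :
    linearizedSum q s N (fun i => c i * v ^ q ^ (s * i)) y = linearizedSum q s N c (v * y) := by
  simp only [linearizedSum, mul_pow, mul_assoc]

theorem linearizedSum_extend {L : Type*} [CommSemiring L] (q s : ℕ) {N : ℕ} (g : Fin N → L)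
    (x : L) :
    linearizedSum q s N (fun i => if hi : i < N then g ⟨i, hi⟩ else 0) x =
      ∑ i, g i * x ^ q ^ (s * i) := by
  rw [linearizedSum, ← Fin.sum_univ_eq_sum_range]
  simp

section LinearizedSum

variable {K L : Type*} [Field K] [Fintype K] [Field L] [Algebra K L] {s : ℕ}

theorem linearizedSum_pow (c : ℕ → L) (N j : ℕ) (x : L) :
    linearizedSum (Fintype.card K) s N c x ^ Fintype.card K ^ (s * j) =
      linearizedSum (Fintype.card K) s (j + N)
        (fun i => if j ≤ i then c (i - j) ^ Fintype.card K ^ (s * j) else 0) x := by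
  rw [linearizedSum, linearizedSum, sum_range_add,
    sum_eq_zero fun i (hi : i ∈ range j) => by simp [(mem_range.1 hi).not_ge], zero_add,
    ← frobeniusAlgHom_pow_apply K, map_sum]
  refine sum_congr rfl fun i _ => ?_
  simp only [le_add_iff_nonneg_right, zero_le, if_true, Nat.add_sub_cancel_left, map_mul,
    frobeniusAlgHom_pow_apply, ← pow_mul, ← pow_add, mul_add, add_comm (s * i)]

theorem linearizedSum_succ_eq_frobenius_sub (c : ℕ → L) (N : ℕ) (y : L) :
    linearizedSum (Fintype.card K) s (N + 1) c y =
      linearizedSum (Fintype.card K) s N (fun i => -∑ j ∈ range (i + 1), c j)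
          (y ^ Fintype.card K ^ s - y) +
        (∑ j ∈ range (N + 1), c j) * y ^ Fintype.card K ^ (s * N) := by
  induction N with
  | zero => simp [linearizedSum]
  | succ N ih =>
    have hsub : (y ^ Fintype.card K ^ s - y) ^ Fintype.card K ^ (s * N) =
        y ^ Fintype.card K ^ (s * (N + 1)) - y ^ Fintype.card K ^ (s * N) := by
      rw [← frobeniusAlgHom_pow_apply K, map_sub, frobeniusAlgHom_pow_apply,
        frobeniusAlgHom_pow_apply, ← pow_mul, ← pow_add, mul_add, mul_one, add_comm]
    simp only [linearizedSum] at ih ⊢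
    rw [sum_range_succ _ (N + 1), ih, sum_range_succ c (N + 1),
      sum_range_succ (fun i => _ * (y ^ Fintype.card K ^ s - y) ^ Fintype.card K ^ (s * i)) N,
      hsub]
    ring

end LinearizedSum

section Moore

variable {K L : Type*} [Field K] [Fintype K] [Field L] [Finite L] [Algebra K L] {s : ℕ}

theorem finrank_le_finrank_map_frobenius_sub_one_add_one (hs : (finrank K L).Coprime s)
    (V : Submodule K L) :
    finrank K V ≤
      finrank K (V.map ((frobeniusAlgHom K L ^ s).toLinearMap - LinearMap.id)) + 1 := by
  set φ : L →ₗ[K] L := (frobeniusAlgHom K L ^ s).toLinearMap - LinearMap.id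
  have hker : (LinearMap.ker (φ.domRestrict V)).map V.subtype ≤
      LinearMap.range (Algebra.linearMap K L) := by
    rintro _ ⟨y, hy, rfl⟩
    have hfix : (y : L) ^ Fintype.card K ^ s = y := by
      simpa [φ, sub_eq_zero, frobeniusAlgHom_pow_apply] using hy
    exact mem_range_algebraMap_of_pow_card_pow_eq_self hs hfix
  have hrk := LinearMap.finrank_range_add_finrank_ker (φ.domRestrict V)
  rw [LinearMap.range_domRestrict] at hrk
  have hker_le : finrank K (LinearMap.ker (φ.domRestrict V)) ≤ 1 :=
    calc finrank K (LinearMap.ker (φ.domRestrict V))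
        = finrank K ((LinearMap.ker (φ.domRestrict V)).map V.subtype) :=
          (Submodule.equivMapOfInjective _ V.injective_subtype _).finrank_eq
      _ ≤ finrank K (LinearMap.range (Algebra.linearMap K L)) := Submodule.finrank_mono hker
      _ ≤ finrank K K := LinearMap.finrank_range_le _
      _ = 1 := finrank_self K
  omega

theorem linearizedSum_coeff_eq_zero (hs : (finrank K L).Coprime s) {V : Submodule K L} {N : ℕ}
    (hN : N ≤ finrank K V) {c : ℕ → L}
    (hc : ∀ u ∈ V, linearizedSum (Fintype.card K) s N c u = 0) : ∀ i < N, c i = 0 := by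
  induction N generalizing V c with
  | zero => exact fun i hi => absurd hi (Nat.not_lt_zero i)
  | succ N ih =>
    obtain ⟨v, hvV, hv0⟩ := Submodule.exists_mem_ne_zero_of_ne_bot (p := V)
      (by rintro rfl; simp at hN)
    -- Rescaling by `v⁻¹` puts `1` into the subspace, so the coefficients sum to zero and the
    -- polynomial factors through `X^{q^s} - X`, whose kernel is only `K`.
    set V' := V.map (LinearMap.mulLeft K v⁻¹)
    have hV' : finrank K V' = finrank K V :=
      (Submodule.equivMapOfInjective _ (mul_right_injective₀ (inv_ne_zero hv0)) V).finrank_eq.symm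
    set c' : ℕ → L := fun i => c i * v ^ Fintype.card K ^ (s * i)
    have hc' : ∀ y ∈ V', linearizedSum (Fintype.card K) s (N + 1) c' y = 0 := by
      rintro _ ⟨u, hu, rfl⟩
      rw [linearizedSum_mul_pow_coeff, LinearMap.mulLeft_apply, mul_inv_cancel_left₀ hv0]
      exact hc u hu
    have hsum : ∑ j ∈ range (N + 1), c' j = 0 := by
      simpa [linearizedSum] using hc' 1 ⟨v, hvV, inv_mul_cancel₀ hv0⟩
    have hE := ih (V := V'.map ((frobeniusAlgHom K L ^ s).toLinearMap - LinearMap.id))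
      (c := fun i => -∑ j ∈ range (i + 1), c' j)
      (by have := finrank_le_finrank_map_frobenius_sub_one_add_one hs V'; omega)
      (by
        rintro _ ⟨y, hy, rfl⟩
        have := linearizedSum_succ_eq_frobenius_sub (K := K) (s := s) c' N y
        rw [hsum, zero_mul, add_zero, hc' y hy] at this
        simpa [frobeniusAlgHom_pow_apply K] using this.symm)
    have hpartial : ∀ i ≤ N + 1, ∑ j ∈ range i, c' j = 0 := by
      rintro (_ | i) hi
      · simp
      · rcases Nat.lt_or_ge i N with h | h
        · exact neg_eq_zero.1 (hE i h)
        · rwa [show i = N by omega]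
    intro i hi
    have hci : c' i = 0 := by
      rw [← sum_range_succ_sub_sum c', hpartial _ hi, hpartial _ hi.le, sub_self]
    exact (mul_eq_zero.1 hci).resolve_right (pow_ne_zero _ hv0)

theorem linearizedSum_coeff_eq (hs : (finrank K L).Coprime s) {V : Submodule K L} {N : ℕ}
    (hN : N ≤ finrank K V) {c c' : ℕ → L}
    (h : Set.EqOn (linearizedSum (Fintype.card K) s N c)
      (linearizedSum (Fintype.card K) s N c') V) :
    ∀ i < N, c i = c' i := fun i hi =>
  sub_eq_zero.1 <| linearizedSum_coeff_eq_zero hs hN (c := c - c') (fun u hu => by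
    simp only [linearizedSum, Pi.sub_apply, sub_mul, sum_sub_distrib]
    exact sub_eq_zero.2 (h hu)) i hi

theorem isLinearizedOn_of_linearMap (hs : (finrank K L).Coprime s) (V : Submodule K L)
    (f : L →ₗ[K] L) : IsLinearizedOn (Fintype.card K) s (finrank K V) f V := by
  set N := finrank K V
  let frobV : Fin N → (V →ₗ[K] L) := fun i =>
    (frobeniusAlgHom K L ^ (s * i)).toLinearMap ∘ₗ V.subtype
  have hsum (g : Fin N → L) (u : V) : (∑ i, g i • frobV i) u =
      linearizedSum (Fintype.card K) s N (fun i => if hi : i < N then g ⟨i, hi⟩ else 0) u := by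
    simp only [linearizedSum_extend, LinearMap.coe_sum, Finset.sum_apply, LinearMap.smul_apply,
      frobV, LinearMap.comp_apply, AlgHom.toLinearMap_apply, Submodule.subtype_apply,
      frobeniusAlgHom_pow_apply, smul_eq_mul]
  have hli : LinearIndependent L frobV := by
    refine Fintype.linearIndependent_iff.2 fun g hg i => ?_
    have := linearizedSum_coeff_eq_zero hs le_rfl
      (fun u hu => by rw [← hsum g ⟨u, hu⟩, hg, LinearMap.zero_apply]) i i.2
    rwa [dif_pos i.2] at this
  have hspan := hli.span_eq_top_of_card_eq_finrank' (by simp [N, finrank_linearMap_self])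
  obtain ⟨g, hg⟩ := (Submodule.mem_span_range_iff_exists_fun L).1
    (hspan ▸ Submodule.mem_top : f ∘ₗ V.subtype ∈ Submodule.span L (Set.range frobV))
  exact ⟨_, fun u hu => by rw [← hsum g ⟨u, hu⟩, hg]; rfl⟩

end Moore

theorem Hval_eq_linearizedSum {F : Type} [Field F] (q s k h : ℕ) (η : F) (a : ℕ → F)
    (x : F) :
    Hval q s k h η a x = linearizedSum q s (k + 1) (Function.update a k (η * a 0 ^ q ^ h)) x := by
  rw [Hval, linearizedSum, sum_range_succ, Function.update_self]
  congr 1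
  exact sum_congr rfl fun i hi => by rw [Function.update_of_ne (mem_range.1 hi).ne]

theorem Hval_single {F : Type} [Field F] {q s k h j : ℕ} (hq : q ≠ 0) (hj0 : j ≠ 0) (hjk : j < k)
    (η ε x : F) : Hval q s k h η (Pi.single j ε) x = ε * x ^ q ^ (s * j) := by
  rw [Hval, Pi.single_eq_of_ne' hj0, zero_pow (pow_ne_zero _ hq), mul_zero, zero_mul, add_zero]
  simp [Pi.single_apply, hjk]

section TwistedGabidulin

variable {K : Type*} {L : Type} [Field K] [Fintype K] [Field L] [Finite L] [Algebra K L]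
  {s k h h' : ℕ} {η η' : L} {U : Submodule K L} {ψ : L →ₗ[K] L}

theorem isLinearizedOn_of_twistedGabidulin (hs : (finrank K L).Coprime s)
    (hU : finrank K U = k + 1)
    (hψ : ∀ a : ℕ → L, ∃ b : ℕ → L, ∀ u ∈ U,
      Hval (Fintype.card K) s k h η a (ψ u) = Hval (Fintype.card K) s k h' η' b u)
    (hk : 1 < k) (hη' : η' ≠ 0) (hh' : ∃ ε : L, ε ^ Fintype.card K ^ h' ≠ ε) :
    IsLinearizedOn (Fintype.card K) s k ψ U := by
  have hq : Fintype.card K ≠ 0 := Fintype.card_ne_zero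
  obtain ⟨e, he⟩ :=
    isLinearizedOn_of_linearMap hs U ((frobeniusAlgHom K L ^ s).toLinearMap ∘ₗ ψ)
  rw [hU] at he
  have he' (u : L) (hu : u ∈ U) :
      ψ u ^ Fintype.card K ^ s = linearizedSum (Fintype.card K) s (k + 1) e u := by
    rw [← he hu]
    exact (frobeniusAlgHom_pow_apply K s (ψ u)).symm
  have key (ε : L) : η' * (ε * e 0) ^ Fintype.card K ^ h' = ε * e k := by
    obtain ⟨b, hb⟩ := hψ (Pi.single 1 ε)
    have hcoeff := linearizedSum_coeff_eq hs hU.ge (c := fun i => ε * e i)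
      (c' := Function.update b k (η' * b 0 ^ Fintype.card K ^ h')) fun u hu => by
        rw [← Hval_eq_linearizedSum, ← hb u hu, Hval_single hq one_ne_zero hk, mul_one,
          he' u hu]
        simp only [linearizedSum, mul_assoc, ← mul_sum]
    have h0 := hcoeff 0 (by omega)
    have hk' := hcoeff k (by omega)
    rw [Function.update_of_ne (by omega)] at h0
    rw [Function.update_self, ← h0] at hk'
    exact hk'.symm
  have he0 : e 0 = 0 := by
    obtain ⟨ε, hε⟩ := hh'
    have h1 := key 1
    rw [one_mul, one_mul] at h1
    have hfix : η' * e 0 ^ Fintype.card K ^ h' * (ε ^ Fintype.card K ^ h' - ε) = 0 := by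
      linear_combination key ε - ε * h1
    simpa [hη', sub_eq_zero, hε, hq] using hfix
  have hinj := (frobeniusAlgHom K L ^ s).toRingHom.injective
  choose r hr using Finite.surjective_of_injective hinj
  have hr' (y : L) : r y ^ Fintype.card K ^ s = y := by
    rw [← frobeniusAlgHom_pow_apply]
    exact hr y
  refine ⟨fun i => r (e (i + 1)), fun u hu => hinj ?_⟩
  have hpow := linearizedSum_pow (K := K) (s := s) (fun i => r (e (i + 1))) k 1 u
  rw [mul_one] at hpow
  simp only [AlgHom.toRingHom_eq_coe, RingHom.coe_coe, frobeniusAlgHom_pow_apply]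
  rw [hpow, he' u hu, add_comm]
  refine sum_congr rfl fun i _ => ?_
  rcases i with _ | i
  · simp [he0]
  · simp only [add_tsub_cancel_right, le_add_iff_nonneg_left, zero_le, if_true, hr']

theorem IsLinearizedOn.pred_of_twistedGabidulin (hs : (finrank K L).Coprime s)
    (hU : finrank K U = k + 1)
    (hψ : ∀ a : ℕ → L, ∃ b : ℕ → L, ∀ u ∈ U,
      Hval (Fintype.card K) s k h η a (ψ u) = Hval (Fintype.card K) s k h' η' b u)
    {M : ℕ} (hM0 : 0 < M) (hMk : M < k) (hψM : IsLinearizedOn (Fintype.card K) s (M + 1) ψ U) :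
    IsLinearizedOn (Fintype.card K) s M ψ U := by
  set q := Fintype.card K
  have hq : q ≠ 0 := Fintype.card_ne_zero
  obtain ⟨c, hc⟩ := hψM
  obtain ⟨b, hb⟩ := hψ (Pi.single (k - M) 1)
  have hcoeff := linearizedSum_coeff_eq hs hU.ge
    (c := fun i => if k - M ≤ i then c (i - (k - M)) ^ q ^ (s * (k - M)) else 0)
    (c' := Function.update b k (η' * b 0 ^ q ^ h')) fun u hu => by
      rw [← Hval_eq_linearizedSum, ← hb u hu, Hval_single hq (by omega) (by omega), one_mul,
        hc hu, linearizedSum_pow, show k - M + (M + 1) = k + 1 by omega]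
  have hb0 : b 0 = 0 := by
    have h0 := hcoeff 0 (by omega)
    rwa [if_neg (by omega), Function.update_of_ne (by omega), eq_comm] at h0
  have hcM : c M = 0 := by
    have hk := hcoeff k (by omega)
    rw [if_pos (by omega), show k - (k - M) = M by omega, Function.update_self, hb0,
      zero_pow (pow_ne_zero _ hq), mul_zero] at hk
    exact (pow_eq_zero_iff (pow_ne_zero _ hq)).1 hk
  refine ⟨c, fun u hu => ?_⟩
  rw [hc hu, linearizedSum, sum_range_succ, hcM, zero_mul, add_zero]
  rfl

end TwistedGabidulin

theorem stmt10_general (q n m k s h h' : ℕ) (Fq Fqn : Type) [Field Fq] [Fintype Fq] [Field Fqn]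
    [Fintype Fqn] [Algebra Fq Fqn]
    (hq : Fintype.card Fq = q) (hqn : Fintype.card Fqn = q ^ n)
    (hk : 2 < k) (hm : m = k + 1)
    (hgcd : Nat.gcd n s = 1) (hh' : h' < n)
    (η η' : Fqn) (hη' : η' ≠ 0)
    -- h̃ ≢ 0 (mod n)
    (hh'0 : ¬ (h' ≡ 0 [MOD n]))
    (α : Fin m → Fqn) (hα : LinearIndependent Fq α)
    (ψ : Fqn →ₗ[Fq] Fqn)
    -- for every f ∈ H_{k,s}(η,h) there is g ∈ H_{k,s}(η',h') with f(ψ(u)) = g(u) on U_S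
    (hψ : ∀ a : ℕ → Fqn, ∃ b : ℕ → Fqn, ∀ u ∈ Submodule.span Fq (Set.range α),
        Hval q s k h η a (ψ u) = Hval q s k h' η' b u) :
    ∃ b : Fqn, ∀ u ∈ Submodule.span Fq (Set.range α), ψ u = b * u := by
  subst hq hm
  have hrank : finrank Fq Fqn = n := by
    have hcard := Module.card_eq_pow_finrank (K := Fq) (V := Fqn)
    rw [hqn] at hcard
    exact (Nat.pow_right_injective Fintype.one_lt_card hcard).symm
  have hs : (finrank Fq Fqn).Coprime s := hrank ▸ hgcd
  have hU : finrank Fq (Submodule.span Fq (Set.range α)) = k + 1 := by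
    rw [finrank_span_eq_card hα, Fintype.card_fin]
  have hdeg : ∀ d < k,
      IsLinearizedOn (Fintype.card Fq) s (k - d) ψ (Submodule.span Fq (Set.range α)) := by
    intro d
    induction d with
    | zero =>
      intro _
      refine isLinearizedOn_of_twistedGabidulin hs hU hψ (by omega) hη'
        (exists_pow_card_pow_ne_self (Nat.pos_of_ne_zero fun h0 => hh'0 ?_) (hrank ▸ hh'))
      rw [h0]
    | succ d ih =>
      intro hd
      have hψd := ih (by omega)
      rw [show k - d = k - (d + 1) + 1 by omega] at hψd
      exact hψd.pred_of_twistedGabidulin hs hU hψ (by omega) (by omega)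
  obtain ⟨c, hc⟩ := hdeg (k - 1) (by omega)
  rw [show k - (k - 1) = 1 by omega] at hc
  exact ⟨c 0, fun u hu => by simpa [linearizedSum] using hc hu⟩

theorem stmt10 (q n m k s h h' : ℕ) (Fq Fqn : Type) [Field Fq] [Fintype Fq] [Field Fqn]
    [Fintype Fqn] [Algebra Fq Fqn]
    (hq : Fintype.card Fq = q) (hqn : Fintype.card Fqn = q ^ n)
    (hn : 0 < n) (hk : 2 < k) (hm : m = k + 1) (hmn : m ≤ n)
    (hs : 0 < s) (hgcd : Nat.gcd n s = 1) (hh : h < n) (hh' : h' < n)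
    (η η' : Fqn) (hη : η ≠ 0) (hη' : η' ≠ 0)
    (hηnorm : η ^ ((q ^ (s * n) - 1) / (q ^ s - 1)) ≠ (-1 : Fqn) ^ (n * k))
    (hη'norm : η' ^ ((q ^ (s * n) - 1) / (q ^ s - 1)) ≠ (-1 : Fqn) ^ (n * k))
    -- h̃ ≢ 0 (mod n)
    (hh'0 : ¬ (h' ≡ 0 [MOD n]))
    (α : Fin m → Fqn) (hα : LinearIndependent Fq α)
    (ψ : Fqn →ₗ[Fq] Fqn)
    -- for every f ∈ H_{k,s}(η,h) there is g ∈ H_{k,s}(η',h') with f(ψ(u)) = g(u) on U_S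
    (hψ : ∀ a : ℕ → Fqn, ∃ b : ℕ → Fqn, ∀ u ∈ Submodule.span Fq (Set.range α),
        Hval q s k h η a (ψ u) = Hval q s k h' η' b u) :
    ∃ b : Fqn, ∀ u ∈ Submodule.span Fq (Set.range α), ψ u = b * u :=
  stmt10_general q n m k s h h' Fq Fqn hq hqn hk hm hgcd hh' η η' hη' hh'0 α hα ψ hψ
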